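/- arXiv:1906.04535 — 2 statements merged into one kernel-verified Lean document; each statement's English description precedes it below -/
import Mathlib

section
/- Let u(t₁,t₂,t₃) satisfy the sine-Gordon equation u₁₂ = sin u and the potential mKdV equation u₃ = u₁₁₁ + (1/2)u₁³, with Lagrangians L₁₂ = (1/2)u₁u₂ − cos u and L₁₃ = (1/2)u₁u₃ − (1/8)u₁⁴ + (1/2)u₁₁². Then on solutions D₂L₁₃ − D₃L₁₂ = D₁F₂₃, where F₂₃ = −(1/2)u₂(u₁₁₁ + (1/2)u₁³) + (1/2)u₁² cos u. -/
noncomputable section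

/-- Partial derivative with respect to `t₁`. -/
def D1 (u : ℝ → ℝ → ℝ → ℝ) : ℝ → ℝ → ℝ → ℝ := fun x y z => deriv (fun s => u s y z) x

/-- Partial derivative with respect to `t₂`. -/
def D2 (u : ℝ → ℝ → ℝ → ℝ) : ℝ → ℝ → ℝ → ℝ := fun x y z => deriv (fun s => u x s z) y

/-- Partial derivative with respect to `t₃`. -/
def D3 (u : ℝ → ℝ → ℝ → ℝ) : ℝ → ℝ → ℝ → ℝ := fun x y z => deriv (fun s => u x y s) z

/-- The sine-Gordon Lagrangian `L₁₂ = ½u₁u₂ − cos u` evaluated on `u`. -/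
def L12 (u : ℝ → ℝ → ℝ → ℝ) : ℝ → ℝ → ℝ → ℝ := fun x y z =>
  (1/2) * D1 u x y z * D2 u x y z - Real.cos (u x y z)

/-- The potential mKdV Lagrangian `L₁₃ = ½u₁u₃ − ⅛u₁⁴ + ½u₁₁²` evaluated on `u`. -/
def L13 (u : ℝ → ℝ → ℝ → ℝ) : ℝ → ℝ → ℝ → ℝ := fun x y z =>
  (1/2) * D1 u x y z * D3 u x y z - (1/8) * (D1 u x y z)^4 + (1/2) * (D1 (D1 u) x y z)^2

/-- `F₂₃ = −½u₂(u₁₁₁ + ½u₁³) + ½u₁² cos u` evaluated on `u`. -/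
def F23 (u : ℝ → ℝ → ℝ → ℝ) : ℝ → ℝ → ℝ → ℝ := fun x y z =>
  -((1/2) * D2 u x y z * (D1^[3] u x y z + (1/2) * (D1 u x y z)^3))
  + (1/2) * (D1 u x y z)^2 * Real.cos (u x y z)

namespace SG17

abbrev V : Type := ℝ × ℝ × ℝ

/-- Directional derivative of `f : ℝ³ → ℝ` in direction `v`. -/
def Ed (v : V) (f : V → ℝ) : V → ℝ := fun p => fderiv ℝ f p v

lemma ed_def (v : V) (f : V → ℝ) (p : V) : Ed v f p = fderiv ℝ f p v := rfl

lemma Ed_contDiff (v : V) {f : V → ℝ} (hf : ContDiff ℝ (⊤ : ℕ∞) f) : ContDiff ℝ (⊤ : ℕ∞) (Ed v f) :=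
  (hf.fderiv_right (by simp)).clm_apply contDiff_const

lemma Ed_symm {f : V → ℝ} (hf : ContDiff ℝ (⊤ : ℕ∞) f) (v w p : V) :
    Ed v (Ed w f) p = Ed w (Ed v f) p := by
  have hdf : DifferentiableAt ℝ (fderiv ℝ f) p :=
    ((hf.fderiv_right (m := 1) (WithTop.coe_le_coe.mpr le_top)).differentiable (by norm_num)) p
  have key : ∀ a b : V, Ed a (Ed b f) p = fderiv ℝ (fderiv ℝ f) p a b := by
    intro a b
    have h : HasFDerivAt (fun q => (ContinuousLinearMap.apply ℝ ℝ b) (fderiv ℝ f q))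
        ((ContinuousLinearMap.apply ℝ ℝ b).comp (fderiv ℝ (fderiv ℝ f) p)) p :=
      (ContinuousLinearMap.apply ℝ ℝ b).hasFDerivAt.comp p hdf.hasFDerivAt
    have h2 : fderiv ℝ (Ed b f) p
        = (ContinuousLinearMap.apply ℝ ℝ b).comp (fderiv ℝ (fderiv ℝ f) p) := h.fderiv
    rw [ed_def, h2]; rfl
  rw [key, key]
  exact (hf.contDiffAt.isSymmSndFDerivAt (by rw [minSmoothness_of_isRCLikeNormedField]; exact WithTop.coe_le_coe.mpr le_top)) v w

section calc_lemmas
variable {f g : V → ℝ} {p : V}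

lemma Ed_const (v : V) (c : ℝ) : Ed v (fun _ => c) p = 0 := by
  simp [Ed]

lemma Ed_add (v : V) (hf : DifferentiableAt ℝ f p) (hg : DifferentiableAt ℝ g p) :
    Ed v (fun q => f q + g q) p = Ed v f p + Ed v g p := by
  simp [Ed, fderiv_fun_add hf hg]

lemma Ed_sub (v : V) (hf : DifferentiableAt ℝ f p) (hg : DifferentiableAt ℝ g p) :
    Ed v (fun q => f q - g q) p = Ed v f p - Ed v g p := by
  simp [Ed, fderiv_fun_sub hf hg]

lemma Ed_neg (v : V) : Ed v (fun q => -f q) p = -Ed v f p := by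
  simp [Ed, fderiv_neg]

lemma Ed_mul (v : V) (hf : DifferentiableAt ℝ f p) (hg : DifferentiableAt ℝ g p) :
    Ed v (fun q => f q * g q) p = f p * Ed v g p + g p * Ed v f p := by
  simp [Ed, fderiv_fun_mul hf hg, smul_eq_mul]

lemma Ed_const_mul (v : V) (c : ℝ) (hf : DifferentiableAt ℝ f p) :
    Ed v (fun q => c * f q) p = c * Ed v f p := by
  simp [Ed, fderiv_const_mul hf c]

lemma Ed_pow (v : V) (n : ℕ) (hf : DifferentiableAt ℝ f p) :
    Ed v (fun q => (f q) ^ n) p = (n : ℝ) * (f p) ^ (n - 1) * Ed v f p := by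
  have h := (hasDerivAt_pow n (f p)).comp_hasFDerivAt p hf.hasFDerivAt
  have h2 : fderiv ℝ (fun q => (f q) ^ n) p
      = ((n : ℝ) * (f p) ^ (n - 1)) • fderiv ℝ f p := h.fderiv
  simp [Ed, h2, mul_assoc]

lemma Ed_cos (v : V) (hf : DifferentiableAt ℝ f p) :
    Ed v (fun q => Real.cos (f q)) p = -Real.sin (f p) * Ed v f p := by
  have h := (Real.hasDerivAt_cos (f p)).comp_hasFDerivAt p hf.hasFDerivAt
  have h2 : fderiv ℝ (fun q => Real.cos (f q)) p
      = (-Real.sin (f p)) • fderiv ℝ f p := h.fderiv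
  simp [Ed, h2]

lemma Ed_sin (v : V) (hf : DifferentiableAt ℝ f p) :
    Ed v (fun q => Real.sin (f q)) p = Real.cos (f p) * Ed v f p := by
  have h := (Real.hasDerivAt_sin (f p)).comp_hasFDerivAt p hf.hasFDerivAt
  have h2 : fderiv ℝ (fun q => Real.sin (f q)) p
      = (Real.cos (f p)) • fderiv ℝ f p := h.fderiv
  simp [Ed, h2]

end calc_lemmas

lemma D1_eq {u : ℝ → ℝ → ℝ → ℝ} {g : V → ℝ} (hg : Differentiable ℝ g)
    (h : ∀ x y z, u x y z = g (x, y, z)) (x y z : ℝ) :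
    D1 u x y z = Ed (1, 0, 0) g (x, y, z) := by
  have h1 : HasDerivAt (fun s : ℝ => ((s, y, z) : V)) ((1 : ℝ), (0 : ℝ), (0 : ℝ)) x :=
    (hasDerivAt_id x).prodMk ((hasDerivAt_const x y).prodMk (hasDerivAt_const x z))
  have h2 := (hg (x, y, z)).hasFDerivAt.comp_hasDerivAt x h1
  simp only [D1, h]
  exact h2.deriv

lemma D2_eq {u : ℝ → ℝ → ℝ → ℝ} {g : V → ℝ} (hg : Differentiable ℝ g)
    (h : ∀ x y z, u x y z = g (x, y, z)) (x y z : ℝ) :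
    D2 u x y z = Ed (0, 1, 0) g (x, y, z) := by
  have h1 : HasDerivAt (fun s : ℝ => ((x, s, z) : V)) ((0 : ℝ), (1 : ℝ), (0 : ℝ)) y :=
    (hasDerivAt_const y x).prodMk ((hasDerivAt_id y).prodMk (hasDerivAt_const y z))
  have h2 := (hg (x, y, z)).hasFDerivAt.comp_hasDerivAt y h1
  simp only [D2, h]
  exact h2.deriv

lemma D3_eq {u : ℝ → ℝ → ℝ → ℝ} {g : V → ℝ} (hg : Differentiable ℝ g)
    (h : ∀ x y z, u x y z = g (x, y, z)) (x y z : ℝ) :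
    D3 u x y z = Ed (0, 0, 1) g (x, y, z) := by
  have h1 : HasDerivAt (fun s : ℝ => ((x, y, s) : V)) ((0 : ℝ), (0 : ℝ), (1 : ℝ)) z :=
    (hasDerivAt_const z x).prodMk ((hasDerivAt_const z y).prodMk (hasDerivAt_id z))
  have h2 := (hg (x, y, z)).hasFDerivAt.comp_hasDerivAt z h1
  simp only [D3, h]
  exact h2.deriv

end SG17

open SG17 in
/-- If `u(t₁,t₂,t₃)` satisfies the sine-Gordon equation `u₁₂ = sin u` and the potential
mKdV equation `u₃ = u₁₁₁ + ½u₁³`, then on solutions `D₂L₁₃ − D₃L₁₂ = D₁F₂₃`. -/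
theorem stmt17 (u : ℝ → ℝ → ℝ → ℝ)
    (hu : ContDiff ℝ (⊤ : ℕ∞) (fun p : ℝ × ℝ × ℝ => u p.1 p.2.1 p.2.2))
    (hsg : ∀ x y z : ℝ, D1 (D2 u) x y z = Real.sin (u x y z))
    (h3 : ∀ x y z : ℝ, D3 u x y z = D1^[3] u x y z + (1/2) * (D1 u x y z)^3) :
    ∀ x y z : ℝ,
      D2 (L13 u) x y z - D3 (L12 u) x y z = D1 (F23 u) x y z := by
  intro x y z
  set F : V → ℝ := fun p : ℝ × ℝ × ℝ => u p.1 p.2.1 p.2.2 with hF0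
  have hF : ContDiff ℝ (⊤ : ℕ∞) F := hu
  have huF : ∀ a b c : ℝ, u a b c = F (a, b, c) := fun _ _ _ => rfl
  set U1 : V → ℝ := Ed (1,0,0) F with hU1
  set U2 : V → ℝ := Ed (0,1,0) F with hU2
  set U3 : V → ℝ := Ed (0,0,1) F with hU3
  set U11 : V → ℝ := Ed (1,0,0) U1 with hU11
  set U111 : V → ℝ := Ed (1,0,0) U11 with hU111
  set U1111 : V → ℝ := Ed (1,0,0) U111 with hU1111
  -- smoothness / differentiability of atoms
  have hc1 : ContDiff ℝ (⊤ : ℕ∞) U1 := Ed_contDiff _ hF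
  have hc2 : ContDiff ℝ (⊤ : ℕ∞) U2 := Ed_contDiff _ hF
  have hc3 : ContDiff ℝ (⊤ : ℕ∞) U3 := Ed_contDiff _ hF
  have hc11 : ContDiff ℝ (⊤ : ℕ∞) U11 := Ed_contDiff _ hc1
  have hc111 : ContDiff ℝ (⊤ : ℕ∞) U111 := Ed_contDiff _ hc11
  have dF : Differentiable ℝ F := hF.differentiable (by simp)
  have du1 : Differentiable ℝ U1 := hc1.differentiable (by simp)
  have du2 : Differentiable ℝ U2 := hc2.differentiable (by simp)
  have du3 : Differentiable ℝ U3 := hc3.differentiable (by simp)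
  have du11 : Differentiable ℝ U11 := hc11.differentiable (by simp)
  have du111 : Differentiable ℝ U111 := hc111.differentiable (by simp)
  -- translation of the partial derivatives
  have t1 : ∀ a b c, D1 u a b c = U1 (a, b, c) := D1_eq dF huF
  have t2 : ∀ a b c, D2 u a b c = U2 (a, b, c) := D2_eq dF huF
  have t3 : ∀ a b c, D3 u a b c = U3 (a, b, c) := D3_eq dF huF
  have t11 : ∀ a b c, D1 (D1 u) a b c = U11 (a, b, c) := D1_eq du1 t1
  have t111 : ∀ a b c, D1^[3] u a b c = U111 (a, b, c) := by
    have h := D1_eq du11 t11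
    intro a b c
    show D1 (D1 (D1 u)) a b c = _
    exact h a b c
  have t12 : ∀ a b c, D1 (D2 u) a b c = Ed (1,0,0) U2 (a, b, c) := D1_eq du2 t2
  -- hypotheses in directional-derivative form
  have hS1 : ∀ p : V, Ed (1,0,0) U2 p = Real.sin (F p) := by
    intro p
    have h := hsg p.1 p.2.1 p.2.2
    rwa [t12, huF] at h
  have hS2 : ∀ p : V, U3 p = U111 p + 1/2 * (U1 p)^3 := by
    intro p
    have h := h3 p.1 p.2.1 p.2.2
    rwa [t3, t111, t1] at h
  have hS2' : U3 = fun p => U111 p + 1/2 * (U1 p)^3 := funext hS2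
  -- consequences of symmetry of second derivatives
  have A1 : ∀ p : V, Ed (0,1,0) U1 p = Real.sin (F p) :=
    fun p => (Ed_symm hF _ _ p).trans (hS1 p)
  have A1' : Ed (0,1,0) U1 = fun p => Real.sin (F p) := funext A1
  have A2 : ∀ p : V, Ed (0,1,0) U11 p = Real.cos (F p) * U1 p := by
    intro p
    rw [hU11, Ed_symm hc1, A1', Ed_sin _ (dF p)]
  have A2' : Ed (0,1,0) U11 = fun p => Real.cos (F p) * U1 p := funext A2
  have A3 : ∀ p : V, Ed (0,1,0) U111 p
      = Real.cos (F p) * U11 p + U1 p * (-Real.sin (F p) * U1 p) := by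
    intro p
    rw [hU111, Ed_symm hc11, A2', Ed_mul _ (by fun_prop) (du1 p), Ed_cos _ (dF p)]
  have A4 : ∀ p : V, Ed (0,1,0) U3 p
      = (Real.cos (F p) * U11 p + U1 p * (-Real.sin (F p) * U1 p))
        + 1/2 * ((3:ℝ) * (U1 p) ^ (3-1) * Real.sin (F p)) := by
    intro p
    rw [hS2', Ed_add _ (du111 p) (by fun_prop), Ed_const_mul _ _ (by fun_prop),
      Ed_pow _ _ (du1 p), A3 p, A1 p]
    norm_num
  have A5 : ∀ p : V, Ed (0,0,1) U1 p
      = U1111 p + 1/2 * ((3:ℝ) * (U1 p) ^ (3-1) * U11 p) := by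
    intro p
    rw [hU1, Ed_symm hF, ← hU3, hS2', Ed_add _ (du111 p) (by fun_prop),
      Ed_const_mul _ _ (by fun_prop), Ed_pow _ _ (du1 p)]
    norm_num
    rfl
  have A6 : ∀ p : V, Ed (0,0,1) U2 p
      = (Real.cos (F p) * U11 p + U1 p * (-Real.sin (F p) * U1 p))
        + 1/2 * ((3:ℝ) * (U1 p) ^ (3-1) * Real.sin (F p)) := by
    intro p
    rw [hU2, Ed_symm hF, ← hU3, A4 p]
  -- translate the three Lagrangian-type quantities
  have TL13 : ∀ a b c, L13 u a b c = (fun q : V =>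
      1/2 * U1 q * U3 q - 1/8 * (U1 q)^4 + 1/2 * (U11 q)^2) (a, b, c) := by
    intro a b c
    simp only [L13, t1, t3, t11]
  have TL12 : ∀ a b c, L12 u a b c = (fun q : V =>
      1/2 * U1 q * U2 q - Real.cos (F q)) (a, b, c) := by
    intro a b c
    simp only [L12, t1, t2, huF]
  have TF23 : ∀ a b c, F23 u a b c = (fun q : V =>
      -(1/2 * U2 q * (U111 q + 1/2 * (U1 q)^3)) + 1/2 * (U1 q)^2 * Real.cos (F q)) (a, b, c) := by
    intro a b c
    simp only [F23, t1, t2, t111, huF]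
  have TD2 : D2 (L13 u) x y z = Ed (0,1,0) (fun q : V =>
      1/2 * U1 q * U3 q - 1/8 * (U1 q)^4 + 1/2 * (U11 q)^2) (x, y, z) :=
    D2_eq (by fun_prop) TL13 x y z
  have TD3 : D3 (L12 u) x y z = Ed (0,0,1) (fun q : V =>
      1/2 * U1 q * U2 q - Real.cos (F q)) (x, y, z) :=
    D3_eq (by fun_prop) TL12 x y z
  have TD1 : D1 (F23 u) x y z = Ed (1,0,0) (fun q : V =>
      -(1/2 * U2 q * (U111 q + 1/2 * (U1 q)^3)) + 1/2 * (U1 q)^2 * Real.cos (F q)) (x, y, z) :=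
    D1_eq (by fun_prop) TF23 x y z
  rw [TD2, TD3, TD1]
  simp (disch := fun_prop) only [Ed_add, Ed_sub, Ed_neg, Ed_mul, Ed_const_mul, Ed_pow,
    Ed_cos, Ed_const]
  simp only [← hU1, ← hU2, ← hU3, ← hU11, ← hU111, ← hU1111]
  simp only [A1, A2, A4, A5, A6, hS1, hS2]
  ring
end
end

section
/- Let L₁₂ = (1/2)u₁u₂ − cos u, L₁₃ = (1/2)u₁u₃ − (1/8)u₁⁴ + (1/2)u₁₁², and L₂₃ = u₁₁(u₁₂ − sin u) − (1/2)u₂u₃ + (1/2)u₁² cos u. Then the expression D₁L₂₃ − D₂L₁₃ + D₃L₁₂ vanishes on all simultaneous solutions of the sine-Gordon equation u₁₂ = sin u and the potential mKdV equation u₃ = u₁₁₁ + (1/2)u₁³ (it vanishes to second order: it is a combination of products of the two equation expressions and their total derivatives). -/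
noncomputable section
abbrev E3 := ℝ × ℝ × ℝ
def Pv (v : E3) (g : E3 → ℝ) : E3 → ℝ := fun p => fderiv ℝ g p v

lemma Pv_contDiff {g : E3 → ℝ} (hg : ContDiff ℝ (⊤ : ℕ∞) g) (v : E3) : ContDiff ℝ (⊤ : ℕ∞) (Pv v g) := by
  have h1 : ContDiff ℝ (⊤ : ℕ∞) (fderiv ℝ g) := hg.fderiv_right (by simp)
  exact h1.clm_apply contDiff_const

lemma Pv_snd {g : E3 → ℝ} (hg : ContDiff ℝ (⊤ : ℕ∞) g) (v w : E3) (p : E3) :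
    Pv v (Pv w g) p = fderiv ℝ (fderiv ℝ g) p v w := by
  have hd : DifferentiableAt ℝ (fderiv ℝ g) p :=
    ((hg.fderiv_right (m := (⊤ : ℕ∞)) (by simp)).differentiable (by simp)) p
  have := fderiv_clm_apply (𝕜 := ℝ) hd (differentiableAt_const w)
  have hPv : Pv w g = fun y => (fderiv ℝ g y) w := rfl
  show fderiv ℝ (Pv w g) p v = _
  rw [hPv, this]
  simp

lemma Pv_comm {g : E3 → ℝ} (hg : ContDiff ℝ (⊤ : ℕ∞) g) (v w : E3) (p : E3) :
    Pv v (Pv w g) p = Pv w (Pv v g) p := by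
  rw [Pv_snd hg, Pv_snd hg]
  exact (hg.contDiffAt.isSymmSndFDerivAt (by norm_num; show ((2:ℕ∞) : WithTop ℕ∞) ≤ ((⊤:ℕ∞) : WithTop ℕ∞); exact WithTop.coe_le_coe.mpr le_top)) v w

lemma Pv_def (v : E3) (g : E3 → ℝ) (p : E3) : Pv v g p = fderiv ℝ g p v := rfl

lemma Pv_add {A B : E3 → ℝ} (hA : ContDiff ℝ (⊤ : ℕ∞) A) (hB : ContDiff ℝ (⊤ : ℕ∞) B) (v p : E3) :
    Pv v (fun q => A q + B q) p = Pv v A p + Pv v B p := by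
  simp only [Pv_def, fderiv_fun_add (hA.differentiable (by simp) p) (hB.differentiable (by simp) p),
    ContinuousLinearMap.add_apply]

lemma Pv_mul {A B : E3 → ℝ} (hA : ContDiff ℝ (⊤ : ℕ∞) A) (hB : ContDiff ℝ (⊤ : ℕ∞) B) (v p : E3) :
    Pv v (fun q => A q * B q) p = Pv v A p * B p + A p * Pv v B p := by
  simp only [Pv_def, fderiv_fun_mul (hA.differentiable (by simp) p) (hB.differentiable (by simp) p),
    ContinuousLinearMap.add_apply, ContinuousLinearMap.smul_apply, smul_eq_mul]
  ring

lemma Pv_const_mul {A : E3 → ℝ} (hA : ContDiff ℝ (⊤ : ℕ∞) A) (c : ℝ) (v p : E3) :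
    Pv v (fun q => c * A q) p = c * Pv v A p := by
  simp only [Pv_def, fderiv_const_mul (hA.differentiable (by simp) p) c,
    ContinuousLinearMap.smul_apply, smul_eq_mul]

lemma Pv_sin {A : E3 → ℝ} (hA : ContDiff ℝ (⊤ : ℕ∞) A) (v p : E3) :
    Pv v (fun q => Real.sin (A q)) p = Real.cos (A p) * Pv v A p := by
  rw [Pv_def, ((hA.differentiable (by simp) p).hasFDerivAt.sin).fderiv]
  simp [Pv_def, smul_eq_mul]

lemma Pv_cos {A : E3 → ℝ} (hA : ContDiff ℝ (⊤ : ℕ∞) A) (v p : E3) :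
    Pv v (fun q => Real.cos (A q)) p = -Real.sin (A p) * Pv v A p := by
  rw [Pv_def, ((hA.differentiable (by simp) p).hasFDerivAt.cos).fderiv]
  simp [Pv_def, smul_eq_mul]

lemma hasD1 {g : E3 → ℝ} (hg : ContDiff ℝ (⊤ : ℕ∞) g) (x y z : ℝ) :
    HasDerivAt (fun s => g (s, y, z)) (Pv (1,0,0) g (x,y,z)) x := by
  have h := (hg.differentiable (by simp) (x,y,z)).hasFDerivAt
  have hι : HasDerivAt (fun s : ℝ => ((s, y, z) : E3)) (1,0,0) x :=
    HasDerivAt.prodMk (hasDerivAt_id x) (HasDerivAt.prodMk (hasDerivAt_const x y) (hasDerivAt_const x z))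
  exact h.comp_hasDerivAt x hι

lemma hasD2 {g : E3 → ℝ} (hg : ContDiff ℝ (⊤ : ℕ∞) g) (x y z : ℝ) :
    HasDerivAt (fun s => g (x, s, z)) (Pv (0,1,0) g (x,y,z)) y := by
  have h := (hg.differentiable (by simp) (x,y,z)).hasFDerivAt
  have hι : HasDerivAt (fun s : ℝ => ((x, s, z) : E3)) (0,1,0) y :=
    HasDerivAt.prodMk (hasDerivAt_const y x) (HasDerivAt.prodMk (hasDerivAt_id y) (hasDerivAt_const y z))
  exact h.comp_hasDerivAt y hι

lemma hasD3 {g : E3 → ℝ} (hg : ContDiff ℝ (⊤ : ℕ∞) g) (x y z : ℝ) :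
    HasDerivAt (fun s => g (x, y, s)) (Pv (0,0,1) g (x,y,z)) z := by
  have h := (hg.differentiable (by simp) (x,y,z)).hasFDerivAt
  have hι : HasDerivAt (fun s : ℝ => ((x, y, s) : E3)) (0,0,1) z :=
    HasDerivAt.prodMk (hasDerivAt_const z x) (HasDerivAt.prodMk (hasDerivAt_const z y) (hasDerivAt_id z))
  exact h.comp_hasDerivAt z hι






/-- `L₂₃ = u₁₁(u₁₂ − sin u) − ½u₂u₃ + ½u₁² cos u` evaluated on `u`. -/
def L23 (u : ℝ → ℝ → ℝ → ℝ) : ℝ → ℝ → ℝ → ℝ := fun x y z =>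
  D1 (D1 u) x y z * (D1 (D2 u) x y z - Real.sin (u x y z))
  - (1/2) * D2 u x y z * D3 u x y z
  + (1/2) * (D1 u x y z)^2 * Real.cos (u x y z)

/-- On simultaneous solutions of the sine-Gordon equation `u₁₂ = sin u` and the potential
mKdV equation `u₃ = u₁₁₁ + ½u₁³`, the exterior-derivative coefficient
`D₁L₂₃ − D₂L₁₃ + D₃L₁₂` vanishes pointwise, i.e. the 2-form
`L₁₂ dt₁∧dt₂ + L₁₃ dt₁∧dt₃ + L₂₃ dt₂∧dt₃` is closed on solutions. -/
theorem stmt18 (u : ℝ → ℝ → ℝ → ℝ)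
    (hu : ContDiff ℝ (⊤ : ℕ∞) (fun p : ℝ × ℝ × ℝ => u p.1 p.2.1 p.2.2))
    (hsg : ∀ x y z : ℝ, D1 (D2 u) x y z = Real.sin (u x y z))
    (h3 : ∀ x y z : ℝ, D3 u x y z = D1^[3] u x y z + (1/2) * (D1 u x y z)^3) :
    ∀ x y z : ℝ,
      D1 (L23 u) x y z - D2 (L13 u) x y z + D3 (L12 u) x y z = 0 := by
  intro x y z
  have hf : ContDiff ℝ (⊤ : ℕ∞) (fun q : E3 => u q.1 q.2.1 q.2.2) := hu
  have h1 : ContDiff ℝ (⊤ : ℕ∞) (Pv (1,0,0) (fun q : E3 => u q.1 q.2.1 q.2.2)) := Pv_contDiff hf (1,0,0)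
  have h2 : ContDiff ℝ (⊤ : ℕ∞) (Pv (0,1,0) (fun q : E3 => u q.1 q.2.1 q.2.2)) := Pv_contDiff hf (0,1,0)
  have h3s : ContDiff ℝ (⊤ : ℕ∞) (Pv (0,0,1) (fun q : E3 => u q.1 q.2.1 q.2.2)) := Pv_contDiff hf (0,0,1)
  have h11 : ContDiff ℝ (⊤ : ℕ∞) (Pv (1,0,0) (Pv (1,0,0) (fun q : E3 => u q.1 q.2.1 q.2.2))) := Pv_contDiff h1 (1,0,0)
  have h21 : ContDiff ℝ (⊤ : ℕ∞) (Pv (1,0,0) (Pv (0,1,0) (fun q : E3 => u q.1 q.2.1 q.2.2))) := Pv_contDiff h2 (1,0,0)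
  have h111 : ContDiff ℝ (⊤ : ℕ∞) (Pv (1,0,0) (Pv (1,0,0) (Pv (1,0,0) (fun q : E3 => u q.1 q.2.1 q.2.2)))) := Pv_contDiff h11 (1,0,0)
  have hu1 : ∀ a b c : ℝ, D1 u a b c = (Pv (1,0,0) (fun q : E3 => u q.1 q.2.1 q.2.2)) (a,b,c) := fun a b c => (hasD1 hf a b c).deriv
  have hu2 : ∀ a b c : ℝ, D2 u a b c = (Pv (0,1,0) (fun q : E3 => u q.1 q.2.1 q.2.2)) (a,b,c) := fun a b c => (hasD2 hf a b c).deriv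
  have hu3 : ∀ a b c : ℝ, D3 u a b c = (Pv (0,0,1) (fun q : E3 => u q.1 q.2.1 q.2.2)) (a,b,c) := fun a b c => (hasD3 hf a b c).deriv
  have hu11 : ∀ a b c : ℝ, D1 (D1 u) a b c = (Pv (1,0,0) (Pv (1,0,0) (fun q : E3 => u q.1 q.2.1 q.2.2))) (a,b,c) := by
    intro a b c
    have e : (fun s => D1 u s b c) = fun s => (Pv (1,0,0) (fun q : E3 => u q.1 q.2.1 q.2.2)) (s,b,c) := funext fun s => hu1 s b c
    show deriv (fun s => D1 u s b c) a = _
    rw [e]; exact (hasD1 h1 a b c).deriv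
  have hu21 : ∀ a b c : ℝ, D1 (D2 u) a b c = (Pv (1,0,0) (Pv (0,1,0) (fun q : E3 => u q.1 q.2.1 q.2.2))) (a,b,c) := by
    intro a b c
    have e : (fun s => D2 u s b c) = fun s => (Pv (0,1,0) (fun q : E3 => u q.1 q.2.1 q.2.2)) (s,b,c) := funext fun s => hu2 s b c
    show deriv (fun s => D2 u s b c) a = _
    rw [e]; exact (hasD1 h2 a b c).deriv
  have hu111 : ∀ a b c : ℝ, D1^[3] u a b c = (Pv (1,0,0) (Pv (1,0,0) (Pv (1,0,0) (fun q : E3 => u q.1 q.2.1 q.2.2)))) (a,b,c) := by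
    intro a b c
    have e : (fun s => D1 (D1 u) s b c) = fun s => (Pv (1,0,0) (Pv (1,0,0) (fun q : E3 => u q.1 q.2.1 q.2.2))) (s,b,c) := funext fun s => hu11 s b c
    show deriv (fun s => D1 (D1 u) s b c) a = _
    rw [e]; exact (hasD1 h11 a b c).deriv
  have hsg' : ∀ q : E3, (Pv (1,0,0) (Pv (0,1,0) (fun q : E3 => u q.1 q.2.1 q.2.2))) q = Real.sin ((fun q : E3 => u q.1 q.2.1 q.2.2) q) := by
    rintro ⟨a, b, c⟩
    rw [← hu21 a b c]; exact hsg a b c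
  have h3' : ∀ q : E3, (Pv (0,0,1) (fun q : E3 => u q.1 q.2.1 q.2.2)) q = (Pv (1,0,0) (Pv (1,0,0) (Pv (1,0,0) (fun q : E3 => u q.1 q.2.1 q.2.2)))) q + 1/2 * ((Pv (1,0,0) (fun q : E3 => u q.1 q.2.1 q.2.2)) q * ((Pv (1,0,0) (fun q : E3 => u q.1 q.2.1 q.2.2)) q * (Pv (1,0,0) (fun q : E3 => u q.1 q.2.1 q.2.2)) q)) := by
    rintro ⟨a, b, c⟩
    have hh := h3 a b c
    rw [hu111 a b c, hu1 a b c] at hh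
    rw [← hu3 a b c, hh]; ring
  have F21 : (Pv (1,0,0) (Pv (0,1,0) (fun q : E3 => u q.1 q.2.1 q.2.2))) = fun q => Real.sin ((fun q : E3 => u q.1 q.2.1 q.2.2) q) := funext hsg'
  have R12 : ∀ q : E3, Pv (0,1,0) (Pv (1,0,0) (fun q : E3 => u q.1 q.2.1 q.2.2)) q = Real.sin ((fun q : E3 => u q.1 q.2.1 q.2.2) q) :=
    fun q => (Pv_comm hf (0,1,0) (1,0,0) q).trans (hsg' q)
  have F12 : Pv (0,1,0) (Pv (1,0,0) (fun q : E3 => u q.1 q.2.1 q.2.2)) = fun q => Real.sin ((fun q : E3 => u q.1 q.2.1 q.2.2) q) := funext R12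
  have R112 : ∀ q : E3, Pv (0,1,0) (Pv (1,0,0) (Pv (1,0,0) (fun q : E3 => u q.1 q.2.1 q.2.2))) q = Real.cos ((fun q : E3 => u q.1 q.2.1 q.2.2) q) * (Pv (1,0,0) (fun q : E3 => u q.1 q.2.1 q.2.2)) q := by
    intro q
    rw [Pv_comm h1 (0,1,0) (1,0,0) q, F12]
    exact Pv_sin hf (1,0,0) q
  have F112 : Pv (0,1,0) (Pv (1,0,0) (Pv (1,0,0) (fun q : E3 => u q.1 q.2.1 q.2.2))) = fun q => Real.cos ((fun q : E3 => u q.1 q.2.1 q.2.2) q) * (Pv (1,0,0) (fun q : E3 => u q.1 q.2.1 q.2.2)) q := funext R112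
  have hcos : ContDiff ℝ (⊤ : ℕ∞) (fun q => Real.cos ((fun q : E3 => u q.1 q.2.1 q.2.2) q)) := hf.cos
  have R1112 : ∀ q : E3, Pv (0,1,0) (Pv (1,0,0) (Pv (1,0,0) (Pv (1,0,0) (fun q : E3 => u q.1 q.2.1 q.2.2)))) q =
      -Real.sin ((fun q : E3 => u q.1 q.2.1 q.2.2) q) * (Pv (1,0,0) (fun q : E3 => u q.1 q.2.1 q.2.2)) q * (Pv (1,0,0) (fun q : E3 => u q.1 q.2.1 q.2.2)) q + Real.cos ((fun q : E3 => u q.1 q.2.1 q.2.2) q) * (Pv (1,0,0) (Pv (1,0,0) (fun q : E3 => u q.1 q.2.1 q.2.2))) q := by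
    intro q
    rw [Pv_comm h11 (0,1,0) (1,0,0) q, F112,
      Pv_mul (A := fun q => Real.cos ((fun q : E3 => u q.1 q.2.1 q.2.2) q)) (B := (Pv (1,0,0) (fun q : E3 => u q.1 q.2.1 q.2.2))) hcos h1 (1,0,0) q,
      Pv_cos hf (1,0,0) q]
  have R121 : ∀ q : E3, Pv (1,0,0) (Pv (1,0,0) (Pv (0,1,0) (fun q : E3 => u q.1 q.2.1 q.2.2))) q = Real.cos ((fun q : E3 => u q.1 q.2.1 q.2.2) q) * (Pv (1,0,0) (fun q : E3 => u q.1 q.2.1 q.2.2)) q := by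
    intro q; rw [F21]; exact Pv_sin hf (1,0,0) q
  have F3 : (Pv (0,0,1) (fun q : E3 => u q.1 q.2.1 q.2.2)) = fun q => (Pv (1,0,0) (Pv (1,0,0) (Pv (1,0,0) (fun q : E3 => u q.1 q.2.1 q.2.2)))) q + 1/2 * ((Pv (1,0,0) (fun q : E3 => u q.1 q.2.1 q.2.2)) q * ((Pv (1,0,0) (fun q : E3 => u q.1 q.2.1 q.2.2)) q * (Pv (1,0,0) (fun q : E3 => u q.1 q.2.1 q.2.2)) q)) := funext h3'
  have hc3 : ContDiff ℝ (⊤ : ℕ∞) (fun q => (Pv (1,0,0) (fun q : E3 => u q.1 q.2.1 q.2.2)) q * ((Pv (1,0,0) (fun q : E3 => u q.1 q.2.1 q.2.2)) q * (Pv (1,0,0) (fun q : E3 => u q.1 q.2.1 q.2.2)) q)) := h1.mul (h1.mul h1)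
  have hcube : ContDiff ℝ (⊤ : ℕ∞) (fun q => 1/2 * ((Pv (1,0,0) (fun q : E3 => u q.1 q.2.1 q.2.2)) q * ((Pv (1,0,0) (fun q : E3 => u q.1 q.2.1 q.2.2)) q * (Pv (1,0,0) (fun q : E3 => u q.1 q.2.1 q.2.2)) q))) := contDiff_const.mul hc3
  have R13 : ∀ q : E3, Pv (1,0,0) (Pv (0,0,1) (fun q : E3 => u q.1 q.2.1 q.2.2)) q =
      Pv (1,0,0) (Pv (1,0,0) (Pv (1,0,0) (Pv (1,0,0) (fun q : E3 => u q.1 q.2.1 q.2.2)))) q + 3/2 * ((Pv (1,0,0) (fun q : E3 => u q.1 q.2.1 q.2.2)) q * (Pv (1,0,0) (fun q : E3 => u q.1 q.2.1 q.2.2)) q) * (Pv (1,0,0) (Pv (1,0,0) (fun q : E3 => u q.1 q.2.1 q.2.2))) q := by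
    intro q
    rw [F3, Pv_add (A := (Pv (1,0,0) (Pv (1,0,0) (Pv (1,0,0) (fun q : E3 => u q.1 q.2.1 q.2.2))))) (B := fun q => 1/2 * ((Pv (1,0,0) (fun q : E3 => u q.1 q.2.1 q.2.2)) q * ((Pv (1,0,0) (fun q : E3 => u q.1 q.2.1 q.2.2)) q * (Pv (1,0,0) (fun q : E3 => u q.1 q.2.1 q.2.2)) q))) h111 hcube (1,0,0) q,
      Pv_const_mul (A := fun q => (Pv (1,0,0) (fun q : E3 => u q.1 q.2.1 q.2.2)) q * ((Pv (1,0,0) (fun q : E3 => u q.1 q.2.1 q.2.2)) q * (Pv (1,0,0) (fun q : E3 => u q.1 q.2.1 q.2.2)) q)) hc3 (1/2) (1,0,0) q,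
      Pv_mul (A := (Pv (1,0,0) (fun q : E3 => u q.1 q.2.1 q.2.2))) (B := fun q => (Pv (1,0,0) (fun q : E3 => u q.1 q.2.1 q.2.2)) q * (Pv (1,0,0) (fun q : E3 => u q.1 q.2.1 q.2.2)) q) h1 (h1.mul h1) (1,0,0) q,
      Pv_mul (A := (Pv (1,0,0) (fun q : E3 => u q.1 q.2.1 q.2.2))) (B := (Pv (1,0,0) (fun q : E3 => u q.1 q.2.1 q.2.2))) h1 h1 (1,0,0) q]
    ring
  have R23 : ∀ q : E3, Pv (0,1,0) (Pv (0,0,1) (fun q : E3 => u q.1 q.2.1 q.2.2)) q =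
      -Real.sin ((fun q : E3 => u q.1 q.2.1 q.2.2) q) * (Pv (1,0,0) (fun q : E3 => u q.1 q.2.1 q.2.2)) q * (Pv (1,0,0) (fun q : E3 => u q.1 q.2.1 q.2.2)) q + Real.cos ((fun q : E3 => u q.1 q.2.1 q.2.2) q) * (Pv (1,0,0) (Pv (1,0,0) (fun q : E3 => u q.1 q.2.1 q.2.2))) q
        + 3/2 * ((Pv (1,0,0) (fun q : E3 => u q.1 q.2.1 q.2.2)) q * (Pv (1,0,0) (fun q : E3 => u q.1 q.2.1 q.2.2)) q) * Real.sin ((fun q : E3 => u q.1 q.2.1 q.2.2) q) := by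
    intro q
    rw [F3, Pv_add (A := (Pv (1,0,0) (Pv (1,0,0) (Pv (1,0,0) (fun q : E3 => u q.1 q.2.1 q.2.2))))) (B := fun q => 1/2 * ((Pv (1,0,0) (fun q : E3 => u q.1 q.2.1 q.2.2)) q * ((Pv (1,0,0) (fun q : E3 => u q.1 q.2.1 q.2.2)) q * (Pv (1,0,0) (fun q : E3 => u q.1 q.2.1 q.2.2)) q))) h111 hcube (0,1,0) q,
      Pv_const_mul (A := fun q => (Pv (1,0,0) (fun q : E3 => u q.1 q.2.1 q.2.2)) q * ((Pv (1,0,0) (fun q : E3 => u q.1 q.2.1 q.2.2)) q * (Pv (1,0,0) (fun q : E3 => u q.1 q.2.1 q.2.2)) q)) hc3 (1/2) (0,1,0) q,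
      Pv_mul (A := (Pv (1,0,0) (fun q : E3 => u q.1 q.2.1 q.2.2))) (B := fun q => (Pv (1,0,0) (fun q : E3 => u q.1 q.2.1 q.2.2)) q * (Pv (1,0,0) (fun q : E3 => u q.1 q.2.1 q.2.2)) q) h1 (h1.mul h1) (0,1,0) q,
      Pv_mul (A := (Pv (1,0,0) (fun q : E3 => u q.1 q.2.1 q.2.2))) (B := (Pv (1,0,0) (fun q : E3 => u q.1 q.2.1 q.2.2))) h1 h1 (0,1,0) q,
      R1112 q, R12 q]
    ring
  have R31 : ∀ q : E3, Pv (0,0,1) (Pv (1,0,0) (fun q : E3 => u q.1 q.2.1 q.2.2)) q = Pv (1,0,0) (Pv (0,0,1) (fun q : E3 => u q.1 q.2.1 q.2.2)) q :=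
    fun q => Pv_comm hf (0,0,1) (1,0,0) q
  have R32 : ∀ q : E3, Pv (0,0,1) (Pv (0,1,0) (fun q : E3 => u q.1 q.2.1 q.2.2)) q = Pv (0,1,0) (Pv (0,0,1) (fun q : E3 => u q.1 q.2.1 q.2.2)) q :=
    fun q => Pv_comm hf (0,0,1) (0,1,0) q
  have hL12 : ∀ a b c : ℝ, L12 u a b c =
      1/2 * (Pv (1,0,0) (fun q : E3 => u q.1 q.2.1 q.2.2)) (a,b,c) * (Pv (0,1,0) (fun q : E3 => u q.1 q.2.1 q.2.2)) (a,b,c) - Real.cos ((fun q : E3 => u q.1 q.2.1 q.2.2) (a,b,c)) := by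
    intro a b c
    have e : L12 u a b c = 1/2 * D1 u a b c * D2 u a b c - Real.cos ((fun q : E3 => u q.1 q.2.1 q.2.2) (a,b,c)) := rfl
    rw [e, hu1, hu2]
  have hL13 : ∀ a b c : ℝ, L13 u a b c =
      1/2 * (Pv (1,0,0) (fun q : E3 => u q.1 q.2.1 q.2.2)) (a,b,c) * (Pv (0,0,1) (fun q : E3 => u q.1 q.2.1 q.2.2)) (a,b,c)
      - 1/8 * ((Pv (1,0,0) (fun q : E3 => u q.1 q.2.1 q.2.2)) (a,b,c) * (Pv (1,0,0) (fun q : E3 => u q.1 q.2.1 q.2.2)) (a,b,c) * ((Pv (1,0,0) (fun q : E3 => u q.1 q.2.1 q.2.2)) (a,b,c) * (Pv (1,0,0) (fun q : E3 => u q.1 q.2.1 q.2.2)) (a,b,c)))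
      + 1/2 * ((Pv (1,0,0) (Pv (1,0,0) (fun q : E3 => u q.1 q.2.1 q.2.2))) (a,b,c) * (Pv (1,0,0) (Pv (1,0,0) (fun q : E3 => u q.1 q.2.1 q.2.2))) (a,b,c)) := by
    intro a b c
    have e : L13 u a b c = 1/2 * D1 u a b c * D3 u a b c - 1/8 * (D1 u a b c)^4
        + 1/2 * (D1 (D1 u) a b c)^2 := rfl
    rw [e, hu11, hu1, hu3]; ring
  have hL23 : ∀ a b c : ℝ, L23 u a b c =
      (Pv (1,0,0) (Pv (1,0,0) (fun q : E3 => u q.1 q.2.1 q.2.2))) (a,b,c) * ((Pv (1,0,0) (Pv (0,1,0) (fun q : E3 => u q.1 q.2.1 q.2.2))) (a,b,c) - Real.sin ((fun q : E3 => u q.1 q.2.1 q.2.2) (a,b,c)))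
      - 1/2 * ((Pv (0,1,0) (fun q : E3 => u q.1 q.2.1 q.2.2)) (a,b,c) * (Pv (0,0,1) (fun q : E3 => u q.1 q.2.1 q.2.2)) (a,b,c))
      + 1/2 * ((Pv (1,0,0) (fun q : E3 => u q.1 q.2.1 q.2.2)) (a,b,c) * (Pv (1,0,0) (fun q : E3 => u q.1 q.2.1 q.2.2)) (a,b,c)) * Real.cos ((fun q : E3 => u q.1 q.2.1 q.2.2) (a,b,c)) := by
    intro a b c
    have e : L23 u a b c = D1 (D1 u) a b c * (D1 (D2 u) a b c - Real.sin ((fun q : E3 => u q.1 q.2.1 q.2.2) (a,b,c)))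
        - 1/2 * D2 u a b c * D3 u a b c + 1/2 * (D1 u a b c)^2 * Real.cos ((fun q : E3 => u q.1 q.2.1 q.2.2) (a,b,c)) := rfl
    rw [e, hu11, hu21, hu1, hu2, hu3]; ring
  have E23 : D1 (L23 u) x y z =
      Pv (1,0,0) (Pv (1,0,0) (Pv (1,0,0) (fun q : E3 => u q.1 q.2.1 q.2.2))) (x,y,z) * ((Pv (1,0,0) (Pv (0,1,0) (fun q : E3 => u q.1 q.2.1 q.2.2))) (x,y,z) - Real.sin ((fun q : E3 => u q.1 q.2.1 q.2.2) (x,y,z)))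
        + (Pv (1,0,0) (Pv (1,0,0) (fun q : E3 => u q.1 q.2.1 q.2.2))) (x,y,z) * (Pv (1,0,0) (Pv (1,0,0) (Pv (0,1,0) (fun q : E3 => u q.1 q.2.1 q.2.2))) (x,y,z) - Real.cos ((fun q : E3 => u q.1 q.2.1 q.2.2) (x,y,z)) * Pv (1,0,0) (fun q : E3 => u q.1 q.2.1 q.2.2) (x,y,z))
      - 1/2 * (Pv (1,0,0) (Pv (0,1,0) (fun q : E3 => u q.1 q.2.1 q.2.2)) (x,y,z) * (Pv (0,0,1) (fun q : E3 => u q.1 q.2.1 q.2.2)) (x,y,z) + (Pv (0,1,0) (fun q : E3 => u q.1 q.2.1 q.2.2)) (x,y,z) * Pv (1,0,0) (Pv (0,0,1) (fun q : E3 => u q.1 q.2.1 q.2.2)) (x,y,z))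
      + (1/2 * (Pv (1,0,0) (Pv (1,0,0) (fun q : E3 => u q.1 q.2.1 q.2.2)) (x,y,z) * (Pv (1,0,0) (fun q : E3 => u q.1 q.2.1 q.2.2)) (x,y,z) + (Pv (1,0,0) (fun q : E3 => u q.1 q.2.1 q.2.2)) (x,y,z) * Pv (1,0,0) (Pv (1,0,0) (fun q : E3 => u q.1 q.2.1 q.2.2)) (x,y,z)) * Real.cos ((fun q : E3 => u q.1 q.2.1 q.2.2) (x,y,z))
        + 1/2 * ((Pv (1,0,0) (fun q : E3 => u q.1 q.2.1 q.2.2)) (x,y,z) * (Pv (1,0,0) (fun q : E3 => u q.1 q.2.1 q.2.2)) (x,y,z)) * (-Real.sin ((fun q : E3 => u q.1 q.2.1 q.2.2) (x,y,z)) * Pv (1,0,0) (fun q : E3 => u q.1 q.2.1 q.2.2) (x,y,z))) := by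
    have e : (fun s => L23 u s y z) = fun s =>
        (Pv (1,0,0) (Pv (1,0,0) (fun q : E3 => u q.1 q.2.1 q.2.2))) (s,y,z) * ((Pv (1,0,0) (Pv (0,1,0) (fun q : E3 => u q.1 q.2.1 q.2.2))) (s,y,z) - Real.sin ((fun q : E3 => u q.1 q.2.1 q.2.2) (s,y,z)))
        - 1/2 * ((Pv (0,1,0) (fun q : E3 => u q.1 q.2.1 q.2.2)) (s,y,z) * (Pv (0,0,1) (fun q : E3 => u q.1 q.2.1 q.2.2)) (s,y,z))
        + 1/2 * ((Pv (1,0,0) (fun q : E3 => u q.1 q.2.1 q.2.2)) (s,y,z) * (Pv (1,0,0) (fun q : E3 => u q.1 q.2.1 q.2.2)) (s,y,z)) * Real.cos ((fun q : E3 => u q.1 q.2.1 q.2.2) (s,y,z)) :=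
      funext fun s => hL23 s y z
    show deriv (fun s => L23 u s y z) x = _
    rw [e]
    exact ((((hasD1 h11 x y z).mul ((hasD1 h21 x y z).sub ((hasD1 hf x y z).sin))).sub
      (((hasD1 h2 x y z).mul (hasD1 h3s x y z)).const_mul (1/2))).add
      ((((hasD1 h1 x y z).mul (hasD1 h1 x y z)).const_mul (1/2)).mul ((hasD1 hf x y z).cos))).deriv
  have E13 : D2 (L13 u) x y z =
      (1/2 * Pv (0,1,0) (Pv (1,0,0) (fun q : E3 => u q.1 q.2.1 q.2.2)) (x,y,z) * (Pv (0,0,1) (fun q : E3 => u q.1 q.2.1 q.2.2)) (x,y,z) + 1/2 * (Pv (1,0,0) (fun q : E3 => u q.1 q.2.1 q.2.2)) (x,y,z) * Pv (0,1,0) (Pv (0,0,1) (fun q : E3 => u q.1 q.2.1 q.2.2)) (x,y,z))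
      - 1/8 * ((Pv (0,1,0) (Pv (1,0,0) (fun q : E3 => u q.1 q.2.1 q.2.2)) (x,y,z) * (Pv (1,0,0) (fun q : E3 => u q.1 q.2.1 q.2.2)) (x,y,z) + (Pv (1,0,0) (fun q : E3 => u q.1 q.2.1 q.2.2)) (x,y,z) * Pv (0,1,0) (Pv (1,0,0) (fun q : E3 => u q.1 q.2.1 q.2.2)) (x,y,z)) * ((Pv (1,0,0) (fun q : E3 => u q.1 q.2.1 q.2.2)) (x,y,z) * (Pv (1,0,0) (fun q : E3 => u q.1 q.2.1 q.2.2)) (x,y,z))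
        + (Pv (1,0,0) (fun q : E3 => u q.1 q.2.1 q.2.2)) (x,y,z) * (Pv (1,0,0) (fun q : E3 => u q.1 q.2.1 q.2.2)) (x,y,z) * (Pv (0,1,0) (Pv (1,0,0) (fun q : E3 => u q.1 q.2.1 q.2.2)) (x,y,z) * (Pv (1,0,0) (fun q : E3 => u q.1 q.2.1 q.2.2)) (x,y,z) + (Pv (1,0,0) (fun q : E3 => u q.1 q.2.1 q.2.2)) (x,y,z) * Pv (0,1,0) (Pv (1,0,0) (fun q : E3 => u q.1 q.2.1 q.2.2)) (x,y,z)))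
      + 1/2 * (Pv (0,1,0) (Pv (1,0,0) (Pv (1,0,0) (fun q : E3 => u q.1 q.2.1 q.2.2))) (x,y,z) * (Pv (1,0,0) (Pv (1,0,0) (fun q : E3 => u q.1 q.2.1 q.2.2))) (x,y,z) + (Pv (1,0,0) (Pv (1,0,0) (fun q : E3 => u q.1 q.2.1 q.2.2))) (x,y,z) * Pv (0,1,0) (Pv (1,0,0) (Pv (1,0,0) (fun q : E3 => u q.1 q.2.1 q.2.2))) (x,y,z)) := by
    have e : (fun s => L13 u x s z) = fun s =>
        1/2 * (Pv (1,0,0) (fun q : E3 => u q.1 q.2.1 q.2.2)) (x,s,z) * (Pv (0,0,1) (fun q : E3 => u q.1 q.2.1 q.2.2)) (x,s,z)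
        - 1/8 * ((Pv (1,0,0) (fun q : E3 => u q.1 q.2.1 q.2.2)) (x,s,z) * (Pv (1,0,0) (fun q : E3 => u q.1 q.2.1 q.2.2)) (x,s,z) * ((Pv (1,0,0) (fun q : E3 => u q.1 q.2.1 q.2.2)) (x,s,z) * (Pv (1,0,0) (fun q : E3 => u q.1 q.2.1 q.2.2)) (x,s,z)))
        + 1/2 * ((Pv (1,0,0) (Pv (1,0,0) (fun q : E3 => u q.1 q.2.1 q.2.2))) (x,s,z) * (Pv (1,0,0) (Pv (1,0,0) (fun q : E3 => u q.1 q.2.1 q.2.2))) (x,s,z)) :=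
      funext fun s => hL13 x s z
    show deriv (fun s => L13 u x s z) y = _
    rw [e]
    exact (((((hasD2 h1 x y z).const_mul (1/2)).mul (hasD2 h3s x y z)).sub
      ((((hasD2 h1 x y z).mul (hasD2 h1 x y z)).mul ((hasD2 h1 x y z).mul (hasD2 h1 x y z))).const_mul (1/8))).add
      (((hasD2 h11 x y z).mul (hasD2 h11 x y z)).const_mul (1/2))).deriv
  have E12 : D3 (L12 u) x y z =
      (1/2 * Pv (0,0,1) (Pv (1,0,0) (fun q : E3 => u q.1 q.2.1 q.2.2)) (x,y,z) * (Pv (0,1,0) (fun q : E3 => u q.1 q.2.1 q.2.2)) (x,y,z) + 1/2 * (Pv (1,0,0) (fun q : E3 => u q.1 q.2.1 q.2.2)) (x,y,z) * Pv (0,0,1) (Pv (0,1,0) (fun q : E3 => u q.1 q.2.1 q.2.2)) (x,y,z))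
      - (-Real.sin ((fun q : E3 => u q.1 q.2.1 q.2.2) (x,y,z)) * Pv (0,0,1) (fun q : E3 => u q.1 q.2.1 q.2.2) (x,y,z)) := by
    have e : (fun s => L12 u x y s) = fun s =>
        1/2 * (Pv (1,0,0) (fun q : E3 => u q.1 q.2.1 q.2.2)) (x,y,s) * (Pv (0,1,0) (fun q : E3 => u q.1 q.2.1 q.2.2)) (x,y,s) - Real.cos ((fun q : E3 => u q.1 q.2.1 q.2.2) (x,y,s)) :=
      funext fun s => hL12 x y s
    show deriv (fun s => L12 u x y s) z = _
    rw [e]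
    exact ((((hasD3 h1 x y z).const_mul (1/2)).mul (hasD3 h2 x y z)).sub
      ((hasD3 hf x y z).cos)).deriv
  rw [E23, E13, E12, R121 (x,y,z), hsg' (x,y,z), R112 (x,y,z), R12 (x,y,z),
    R31 (x,y,z), R32 (x,y,z), R13 (x,y,z), R23 (x,y,z), h3' (x,y,z)]
  ring
end
end
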